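/- Iteration lemma (abstract decay): let E : ℕ → ℝ≥0, let 0 < θ < 1/2, 0 < β < 2/3, c₁ > 0 with c₁ θ^{1/3 − β/2} ≤ 1, and suppose that whenever E(k) ≤ ε₁ and the running bound a + θ^{−5/3} ∑_{j<k} E(j) ≤ M holds one has E(k+1) ≤ c₁ θ^{2/3} E(k). If E(0) ≤ ε₂ := (1 − θ^{1/3−β/2}) min{ ε₁/2, θ^{5/3}(1−θ^β) M/2 } and a ≤ M/2, then for all k ≥ 0: (i) a + θ^{−5/3} ∑_{j<k} E(j) ≤ M, (ii) E(k) ≤ ε₁, and (iii) E(k+1) ≤ θ^{(k+1)β} (1 − θ^{1/3−β/2})^{−1} E(0). -/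

import Mathlib

/-!
With `r = θ^β`, the smallness condition `c₁ θ^{1/3-β/2} ≤ 1` and `β ≤ 2/3` give
`c₁ θ^{2/3} ≤ θ^{1/3+β/2} ≤ r`, so each application of the decay hypothesis gains a factor `r`.
By strong induction `E j ≤ r^j E 0` for all `j`: the geometric series bounds the running sum by
`E 0 / (1 - r)`, which the choice of `E 0` keeps below `θ^{5/3} M / 2`, so the running bound and
`E k ≤ E 0 ≤ ε₁` hold at every step and the decay hypothesis can be applied again.
-/

open Finset

theorem le_pow_mul_of_step {E : ℕ → ℝ} {r : ℝ} (hr : 0 ≤ r)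
    (hstep : ∀ n, (∀ j ≤ n, E j ≤ r ^ j * E 0) → E (n + 1) ≤ r * E n) :
    ∀ k, E k ≤ r ^ k * E 0 := by
  intro k
  induction k using Nat.strong_induction_on with
  | _ k ih =>
    cases k with
    | zero => simp
    | succ n =>
      calc E (n + 1) ≤ r * E n := hstep n fun j hj => ih j (Nat.lt_succ_of_le hj)
        _ ≤ r * (r ^ n * E 0) := mul_le_mul_of_nonneg_left (ih n n.lt_succ_self) hr
        _ = r ^ (n + 1) * E 0 := by ring

theorem sum_range_le_div_of_le_pow_mul {E : ℕ → ℝ} {r : ℝ} {k : ℕ} (hr0 : 0 ≤ r) (hr1 : r < 1)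
    (hE0 : 0 ≤ E 0) (h : ∀ j < k, E j ≤ r ^ j * E 0) :
    ∑ j ∈ range k, E j ≤ E 0 / (1 - r) :=
  calc ∑ j ∈ range k, E j ≤ ∑ j ∈ range k, r ^ j * E 0 :=
        sum_le_sum fun j hj => h j (mem_range.mp hj)
    _ = (∑ j ∈ Ico 0 k, r ^ j) * E 0 := by rw [sum_mul, range_eq_Ico]
    _ ≤ r ^ 0 / (1 - r) * E 0 :=
        mul_le_mul_of_nonneg_right (geom_sum_Ico_le_of_lt_one hr0 hr1) hE0
    _ = E 0 / (1 - r) := by ring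

theorem le_of_le_mul_of_le_one {R : Type*} [Semiring R] [LinearOrder R] [IsStrictOrderedRing R]
    {x s m : R} (hx : 0 ≤ x) (hs0 : 0 < s) (hs1 : s ≤ 1) (h : x ≤ s * m) : x ≤ m :=
  h.trans (mul_le_of_le_one_left (nonneg_of_mul_nonneg_right (hx.trans h) hs0) hs1)

theorem mul_rpow_le_rpow_sub {θ c p s : ℝ} (hθ : 0 < θ) (h : c * θ ^ s ≤ 1) :
    c * θ ^ p ≤ θ ^ (p - s) := by
  rw [Real.rpow_sub hθ, le_div_iff₀ (Real.rpow_pos_of_pos hθ s)]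
  calc c * θ ^ p * θ ^ s = (c * θ ^ s) * θ ^ p := by ring
    _ ≤ 1 * θ ^ p := mul_le_mul_of_nonneg_right h (Real.rpow_pos_of_pos hθ p).le
    _ = θ ^ p := one_mul _

theorem add_inv_mul_le_of_le_div {x r a M S e : ℝ} (hx : 0 < x) (hr : r < 1) (ha : a ≤ M / 2)
    (hS : S ≤ e / (1 - r)) (he : e ≤ x * (1 - r) * (M / 2)) : a + x⁻¹ * S ≤ M := by
  have hS' : S ≤ x * (M / 2) := hS.trans <| (div_le_iff₀ (sub_pos.2 hr)).2 (by linarith)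
  linarith [(inv_mul_le_iff₀ hx).2 hS']

theorem stmt8_general (E : ℕ → ℝ) (hE : ∀ k, 0 ≤ E k)
    (θ β c₁ ε₁ a M : ℝ)
    (hθ : 0 < θ) (hθ' : θ < 1 / 2) (hβ : 0 < β) (hβ' : β < 2 / 3)
    (hsmall : c₁ * θ ^ ((1 : ℝ) / 3 - β / 2) ≤ 1)
    (ha : a ≤ M / 2)
    (hdecay : ∀ k, E k ≤ ε₁ →
      a + θ ^ (-(5 : ℝ) / 3) * ∑ j ∈ Finset.range k, E j ≤ M →
      E (k + 1) ≤ c₁ * θ ^ ((2 : ℝ) / 3) * E k)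
    (hE0 : E 0 ≤ (1 - θ ^ ((1 : ℝ) / 3 - β / 2)) *
      min (ε₁ / 2) (θ ^ ((5 : ℝ) / 3) * (1 - θ ^ β) * (M / 2))) :
    ∀ k : ℕ,
      (a + θ ^ (-(5 : ℝ) / 3) * ∑ j ∈ Finset.range k, E j ≤ M) ∧
      E k ≤ ε₁ ∧
      E (k + 1) ≤ θ ^ (((k : ℝ) + 1) * β) * (1 - θ ^ ((1 : ℝ) / 3 - β / 2))⁻¹ * E 0 := by
  have hθ1 : θ ≤ 1 := by linarith
  have ht0 : 0 ≤ θ ^ ((1 : ℝ) / 3 - β / 2) := Real.rpow_nonneg hθ.le _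
  have ht : θ ^ ((1 : ℝ) / 3 - β / 2) < 1 := Real.rpow_lt_one hθ.le (by linarith) (by linarith)
  have hr0 : 0 ≤ θ ^ β := Real.rpow_nonneg hθ.le β
  have hr1 : θ ^ β < 1 := Real.rpow_lt_one hθ.le (by linarith) hβ
  have hE0min : E 0 ≤ min (ε₁ / 2) (θ ^ ((5 : ℝ) / 3) * (1 - θ ^ β) * (M / 2)) :=
    le_of_le_mul_of_le_one (hE 0) (sub_pos.2 ht) (by linarith) hE0
  have hq : c₁ * θ ^ ((2 : ℝ) / 3) ≤ θ ^ β :=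
    (mul_rpow_le_rpow_sub hθ hsmall).trans
      (Real.rpow_le_rpow_of_exponent_ge hθ hθ1 (by linarith))
  have hrun : ∀ k, (∀ j < k, E j ≤ (θ ^ β) ^ j * E 0) →
      a + θ ^ (-(5 : ℝ) / 3) * ∑ j ∈ range k, E j ≤ M := fun k hk => by
    rw [neg_div, Real.rpow_neg hθ.le]
    exact add_inv_mul_le_of_le_div (Real.rpow_pos_of_pos hθ _) hr1 ha
      (sum_range_le_div_of_le_pow_mul hr0 hr1 (hE 0) hk) (hE0min.trans (min_le_right _ _))
  have hsmallE : ∀ k, E k ≤ (θ ^ β) ^ k * E 0 → E k ≤ ε₁ := fun k hk =>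
    hk.trans <| (mul_le_of_le_one_left (hE 0) (pow_le_one₀ hr0 hr1.le)).trans
      (by linarith [hE 0, hE0min.trans (min_le_left _ _)])
  have hgeom : ∀ k, E k ≤ (θ ^ β) ^ k * E 0 := le_pow_mul_of_step hr0 fun n hn =>
    (hdecay n (hsmallE n (hn n le_rfl)) (hrun n fun j hj => hn j hj.le)).trans
      (mul_le_mul_of_nonneg_right hq (hE n))
  intro k
  refine ⟨hrun k fun j _ => hgeom j, hsmallE k (hgeom k), ?_⟩
  calc E (k + 1) ≤ (θ ^ β) ^ (k + 1) * E 0 := hgeom (k + 1)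
    _ = θ ^ (((k : ℝ) + 1) * β) * E 0 := by
      rw [← Real.rpow_mul_natCast hθ.le, Nat.cast_succ, mul_comm β]
    _ ≤ _ := by
      rw [mul_assoc]
      gcongr
      exact le_mul_of_one_le_left (hE 0) ((one_le_inv₀ (sub_pos.2 ht)).2 (by linarith))

/-- Abstract iteration/decay lemma (numerical content of the iteration lemma of Section 3).
`E k` stands for `E(x,t,θᵏr)` and `a` for `|u_{Q_r}| + |F_{Q_r}|`. -/
theorem stmt8 (E : ℕ → ℝ) (hE : ∀ k, 0 ≤ E k)
    (θ β c₁ ε₁ a M : ℝ)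
    (hθ : 0 < θ) (hθ' : θ < 1 / 2) (hβ : 0 < β) (hβ' : β < 2 / 3)
    (hc₁ : 0 < c₁) (hsmall : c₁ * θ ^ ((1 : ℝ) / 3 - β / 2) ≤ 1)
    (hε₁ : 0 < ε₁) (hM : 0 < M) (ha0 : 0 ≤ a) (ha : a ≤ M / 2)
    (hdecay : ∀ k, E k ≤ ε₁ →
      a + θ ^ (-(5 : ℝ) / 3) * ∑ j ∈ Finset.range k, E j ≤ M →
      E (k + 1) ≤ c₁ * θ ^ ((2 : ℝ) / 3) * E k)
    (hE0 : E 0 ≤ (1 - θ ^ ((1 : ℝ) / 3 - β / 2)) *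
      min (ε₁ / 2) (θ ^ ((5 : ℝ) / 3) * (1 - θ ^ β) * (M / 2))) :
    ∀ k : ℕ,
      (a + θ ^ (-(5 : ℝ) / 3) * ∑ j ∈ Finset.range k, E j ≤ M) ∧
      E k ≤ ε₁ ∧
      E (k + 1) ≤ θ ^ (((k : ℝ) + 1) * β) * (1 - θ ^ ((1 : ℝ) / 3 - β / 2))⁻¹ * E 0 :=
  stmt8_general E hE θ β c₁ ε₁ a M hθ hθ' hβ hβ' hsmall ha hdecay hE0
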